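/- arXiv:2403.14885 — 3 statements merged into one kernel-verified Lean document; each statement's English description precedes it below -/
import Mathlib

section
/- Let A ∈ 𝒜 be an additive PCM and let A′ be the orthogonal projection (with respect to the Frobenius inner product) of A onto the tie space 𝒜₁₂. Then for each k ∉ {1,2}, the k-th row sum of A′ equals the k-th row sum of A. -/
/-!
Test the orthogonality of `A - A'` against `B = e_k 𝟙ᵀ - 𝟙 e_kᵀ`. This matrix is skew-symmetric
and all its row sums except the `k`-th equal `-1`, so it lies in the tie space when `k` is neither
of the first two rows. Since `A - A'` is skew-symmetric, `⟨A - A', B⟩` is twice the `k`-th row sum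
of `A - A'`.
-/

/-- The Frobenius inner product `⟨A,B⟩ = Σ_{k,l} a_{kl} b_{kl}`. -/
def finner {n : ℕ} (A B : Matrix (Fin n) (Fin n) ℝ) : ℝ :=
  ∑ k, ∑ l, A k l * B k l

/-- The tie space `𝒜₁₂` inside the `(n+2) × (n+2)` matrices: skew-symmetric
matrices whose first two row sums coincide. -/
def tieSpace (n : ℕ) : Submodule ℝ (Matrix (Fin (n + 2)) (Fin (n + 2)) ℝ) where
  carrier := {A | (∀ i j, A i j + A j i = 0) ∧ ∑ k, A 0 k = ∑ k, A 1 k}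
  add_mem' := by
    intro a b ha hb
    refine ⟨fun i j => ?_, ?_⟩
    · have h1 := ha.1 i j
      have h2 := hb.1 i j
      simp only [Matrix.add_apply]
      linarith
    · simp only [Matrix.add_apply, Finset.sum_add_distrib, ha.2, hb.2]
  zero_mem' := by
    refine ⟨fun i j => ?_, ?_⟩ <;> simp
  smul_mem' := by
    intro c a ha
    refine ⟨fun i j => ?_, ?_⟩
    · have h := ha.1 i j
      simp only [Matrix.smul_apply, smul_eq_mul]
      linear_combination c * h
    · simp only [Matrix.smul_apply, smul_eq_mul, ← Finset.mul_sum, ha.2]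

open Finset

def rowSubCol {ι : Type*} [DecidableEq ι] (k : ι) : Matrix ι ι ℝ :=
  Matrix.of fun i j => (if i = k then 1 else 0) - (if j = k then 1 else 0)

lemma rowSubCol_add_transpose {ι : Type*} [DecidableEq ι] (k i j : ι) :
    rowSubCol k i j + rowSubCol k j i = 0 := by
  simp only [rowSubCol, Matrix.of_apply]
  ring

lemma sum_rowSubCol_of_ne {ι : Type*} [Fintype ι] [DecidableEq ι] {k i : ι} (h : i ≠ k) :
    ∑ j, rowSubCol k i j = -1 := by
  simp [rowSubCol, h]

lemma rowSubCol_mem_tieSpace {n : ℕ} {k : Fin (n + 2)} (hk0 : k ≠ 0) (hk1 : k ≠ 1) :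
    rowSubCol k ∈ tieSpace n :=
  ⟨rowSubCol_add_transpose k, by rw [sum_rowSubCol_of_ne hk0.symm, sum_rowSubCol_of_ne hk1.symm]⟩

lemma finner_rowSubCol {n : ℕ} (X : Matrix (Fin n) (Fin n) ℝ) (k : Fin n) :
    finner X (rowSubCol k) = ∑ l, X k l - ∑ l, X l k := by
  simp [finner, rowSubCol, mul_sub, sum_sub_distrib]

lemma sum_col_eq_neg_sum_row {ι : Type*} [Fintype ι] {X : Matrix ι ι ℝ}
    (hX : ∀ i j, X i j + X j i = 0) (k : ι) : ∑ l, X l k = -∑ l, X k l := by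
  rw [← sum_neg_distrib]
  exact sum_congr rfl fun l _ => eq_neg_of_add_eq_zero_left (hX l k)

/-- If `A′` is the orthogonal projection (w.r.t. the Frobenius inner product) of a
skew-symmetric `A` onto the tie space `𝒜₁₂`, then for each row `k` other than the
first two, the `k`-th row sum of `A′` equals that of `A`. -/
theorem proj_rowSum_eq {n : ℕ} (A A' : Matrix (Fin (n + 2)) (Fin (n + 2)) ℝ)
    (hA : ∀ i j, A i j + A j i = 0)
    (hA' : A' ∈ tieSpace n)
    (horth : ∀ B ∈ tieSpace n, finner (A - A') B = 0) :
    ∀ k : Fin (n + 2), k ≠ 0 → k ≠ 1 → ∑ l, A' k l = ∑ l, A k l := by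
  intro k hk0 hk1
  have hskew : ∀ i j, (A - A') i j + (A - A') j i = 0 := fun i j => by
    simp only [Matrix.sub_apply]
    linarith [hA i j, hA'.1 i j]
  have h := horth _ (rowSubCol_mem_tieSpace hk0 hk1)
  rw [finner_rowSubCol, sum_col_eq_neg_sum_row hskew] at h
  simp only [Matrix.sub_apply, sum_sub_distrib] at h
  linarith
end

section
/- Let A ∈ 𝒜 be an additive PCM and let A′ be the orthogonal projection of A onto the tie space 𝒜₁₂. Then the first and second row sums of A′ are both equal to the arithmetic mean of the first and second row sums of A: Σ_l a′_{1l} = Σ_l a′_{2l} = (Σ_l a_{1l} + Σ_l a_{2l})/2. -/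
/-!
Test the orthogonality of `A - A'` against the skew matrix `B_{ij} = f_i - f_j`, where `f` is the
indicator of the first two indices. Since `B` has equal first two row sums it lies in `𝒜₁₂`, and for
skew `D` one has `⟨D, B⟩ = 2 Σ_k f_k Σ_l d_{kl}`; so the first two row sums of `A - A'` add up to `0`,
while those of `A'` agree.
-/

open Finset

def diffMatrix {ι : Type*} (f : ι → ℝ) : Matrix ι ι ℝ :=
  Matrix.of fun i j => f i - f j

theorem finner_diffMatrix {m : ℕ} {D : Matrix (Fin m) (Fin m) ℝ}
    (hD : ∀ i j, D i j + D j i = 0) (f : Fin m → ℝ) :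
    finner D (diffMatrix f) = 2 * ∑ k, f k * ∑ l, D k l := by
  have hswap : ∑ k, ∑ l, D k l * f l = -∑ k, ∑ l, D k l * f k := by
    rw [sum_comm, ← sum_neg_distrib]
    refine sum_congr rfl fun k _ => ?_
    rw [← sum_neg_distrib]
    exact sum_congr rfl fun l _ => by linear_combination f k * hD l k
  calc finner D (diffMatrix f)
      = ∑ k, ∑ l, D k l * f k - ∑ k, ∑ l, D k l * f l := by
        simp only [finner, diffMatrix, Matrix.of_apply, mul_sub, sum_sub_distrib]
    _ = 2 * ∑ k, ∑ l, D k l * f k := by rw [hswap]; ring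
    _ = 2 * ∑ k, f k * ∑ l, D k l := by simp_rw [mul_sum, mul_comm (f _)]

theorem diffMatrix_mem_tieSpace {n : ℕ} {f : Fin (n + 2) → ℝ} (hf : f 0 = f 1) :
    diffMatrix f ∈ tieSpace n :=
  ⟨fun i j => by simp [diffMatrix], by simp [diffMatrix, hf]⟩

theorem sum_indicator_pair_mul {ι : Type*} [Fintype ι] [DecidableEq ι] {i j : ι} (hij : i ≠ j)
    (r : ι → ℝ) : ∑ k, (if k ∈ ({i, j} : Finset ι) then 1 else 0) * r k = r i + r j := by
  simp only [ite_mul, one_mul, zero_mul, sum_ite_mem, univ_inter]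
  exact sum_pair hij

/-- If `A′` is the orthogonal projection of a skew-symmetric `A` onto the tie
space `𝒜₁₂`, then the first and second row sums of `A′` are both equal to the
arithmetic mean of the first and second row sums of `A`. -/
theorem proj_first_two_rowSums {n : ℕ} (A A' : Matrix (Fin (n + 2)) (Fin (n + 2)) ℝ)
    (hA : ∀ i j, A i j + A j i = 0)
    (hA' : A' ∈ tieSpace n)
    (horth : ∀ B ∈ tieSpace n, finner (A - A') B = 0) :
    ∑ l, A' 0 l = ∑ l, A' 1 l ∧
    ∑ l, A' 0 l = (∑ l, A 0 l + ∑ l, A 1 l) / 2 := by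
  have hskew : ∀ i j, (A - A') i j + (A - A') j i = 0 := fun i j => by
    simp only [Matrix.sub_apply]
    linear_combination hA i j - hA'.1 i j
  let f : Fin (n + 2) → ℝ := fun k => if k ∈ ({0, 1} : Finset (Fin (n + 2))) then 1 else 0
  have hrows : ∑ l, (A - A') 0 l + ∑ l, (A - A') 1 l = 0 := by
    have h := horth (diffMatrix f) (diffMatrix_mem_tieSpace (by simp [f]))
    rwa [finner_diffMatrix hskew, sum_indicator_pair_mul zero_ne_one, mul_eq_zero,
      or_iff_right two_ne_zero] at h
  simp only [Matrix.sub_apply, sum_sub_distrib] at hrows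
  exact ⟨hA'.2, by linarith [hA'.2]⟩
end

section
/- Let A ∈ 𝒜 and let A′ be the orthogonal projection of A onto 𝒜₁₂. Then the total sum of all entries of A′ equals the total sum of all entries of A (both are zero, by skew-symmetry), and more specifically the row-sum (weight) vector of A′ differs from that of A only in coordinates 1 and 2. -/
/-!
Skew-symmetry alone forces every total sum to vanish. For the weights, pair `A - A'` with the
star matrix `E_k = e_k 𝟙ᵀ - 𝟙 e_kᵀ`: it is skew-symmetric, and for `k ∉ {1, 2}` rows 1 and 2
of `E_k` both sum to `-1`, so `E_k ∈ 𝒜₁₂`. Against a skew-symmetric matrix `M` it gives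
`⟨M, E_k⟩ = 2 Σ_l m_{kl}`, so orthogonality of `A - A'` to `𝒜₁₂` says that row `k` of `A - A'`
sums to zero.
-/

open Finset

section Skew

variable {ι R : Type*} [Fintype ι] [AddCommGroup R]

theorem sum_sum_eq_zero_of_skew [IsAddTorsionFree R] (M : Matrix ι ι R)
    (hM : ∀ i j, M i j + M j i = 0) : ∑ i, ∑ j, M i j = 0 := by
  have hdouble : 2 • ∑ i, ∑ j, M i j = 0 := calc
    2 • ∑ i, ∑ j, M i j = ∑ i, ∑ j, M i j + ∑ j, ∑ i, M i j := by rw [sum_comm, two_nsmul]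
    _ = ∑ i, ∑ j, (M i j + M j i) := by simp only [← sum_add_distrib]
    _ = 0 := by simp [hM]
  exact two_nsmul_eq_zero.mp hdouble

theorem sum_col_eq_neg_sum_row_of_skew (M : Matrix ι ι R) (hM : ∀ i j, M i j + M j i = 0)
    (k : ι) : ∑ i, M i k = -∑ l, M k l := by
  rw [← sum_neg_distrib]
  exact sum_congr rfl fun i _ => eq_neg_of_add_eq_zero_left (hM i k)

end Skew

section StarMatrix

variable {ι R : Type*} [DecidableEq ι] [Ring R]

def starMatrix (k : ι) : Matrix ι ι R :=
  fun i j => (if i = k then 1 else 0) - (if j = k then 1 else 0)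

theorem starMatrix_skew (k i j : ι) : starMatrix (R := R) k i j + starMatrix k j i = 0 := by
  simp only [starMatrix]
  abel

theorem sum_starMatrix_row_of_ne [Fintype ι] {k m : ι} (hm : m ≠ k) :
    ∑ j, starMatrix (R := R) k m j = -1 := by
  simp [starMatrix, hm]

end StarMatrix

theorem starMatrix_mem_tieSpace {n : ℕ} {k : Fin (n + 2)} (hk0 : k ≠ 0) (hk1 : k ≠ 1) :
    starMatrix k ∈ tieSpace n :=
  ⟨starMatrix_skew k, by
    rw [sum_starMatrix_row_of_ne hk0.symm, sum_starMatrix_row_of_ne hk1.symm]⟩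

theorem finner_starMatrix {n : ℕ} (M : Matrix (Fin n) (Fin n) ℝ) (k : Fin n) :
    finner M (starMatrix k) = ∑ l, M k l - ∑ i, M i k := by
  simp only [finner, starMatrix, mul_sub, mul_ite, mul_one, mul_zero, sum_sub_distrib]
  rw [sum_comm (f := fun i j => if j = k then M i j else 0)]
  simp

theorem finner_starMatrix_of_skew {n : ℕ} (M : Matrix (Fin n) (Fin n) ℝ)
    (hM : ∀ i j, M i j + M j i = 0) (k : Fin n) :
    finner M (starMatrix k) = 2 * ∑ l, M k l := by
  rw [finner_starMatrix, sum_col_eq_neg_sum_row_of_skew M hM]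
  ring

/-- If `A′` is the orthogonal projection of a skew-symmetric `A` onto the tie
space `𝒜₁₂`, then the total sum of entries of `A′` equals that of `A` (both are
zero), and the row-sum (weight) vector of `A′` differs from that of `A` only in
coordinates 1 and 2 (here `Fin` indices 0 and 1). -/
theorem proj_total_sum_and_weights {n : ℕ}
    (A A' : Matrix (Fin (n + 2)) (Fin (n + 2)) ℝ)
    (hA : ∀ i j, A i j + A j i = 0)
    (hA' : A' ∈ tieSpace n)
    (horth : ∀ B ∈ tieSpace n, finner (A - A') B = 0) :
    (∑ i, ∑ j, A' i j) = (∑ i, ∑ j, A i j) ∧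
    (∑ i, ∑ j, A' i j) = 0 ∧
    (∀ k : Fin (n + 2), k ≠ 0 → k ≠ 1 → ∑ l, A' k l = ∑ l, A k l) := by
  have hA'_zero := sum_sum_eq_zero_of_skew A' hA'.1
  refine ⟨by rw [hA'_zero, sum_sum_eq_zero_of_skew A hA], hA'_zero, fun k hk0 hk1 => ?_⟩
  have hskew : ∀ i j, (A - A') i j + (A - A') j i = 0 := fun i j => by
    simp only [Matrix.sub_apply]
    linear_combination hA i j - hA'.1 i j
  have hrow := horth _ (starMatrix_mem_tieSpace hk0 hk1)
  rw [finner_starMatrix_of_skew _ hskew] at hrow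
  simp only [Matrix.sub_apply, sum_sub_distrib] at hrow
  linarith
end
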